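/- Let T be a shape topology on a Boolean algebra α and T' a shape topology on a Boolean algebra β. Let f : α → β be monotone and let g : β → α be such that for every y ∈ β, g y is the greatest element of {x : α | f x ≤ y}. Assume f is continuous, i.e. g D ∈ T for every D ∈ T'. Then for every x ∈ α, f maps the closure of x into the closure of f x: f (cl_T x) ≤ cl_{T'} (f x), where cl_T x denotes the smallest element of T above x and cl_{T'}(f x) the smallest element of T' above f x. -/
import Mathlib


variable {α : Type*} [BooleanAlgebra α]

/-- A shape topology: a finite set of parts containing `⊥` and `⊤`,
closed under sum and product. -/
def IsShapeTopology {γ : Type*} [BooleanAlgebra γ] (T : Finset γ) : Prop :=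
  ⊥ ∈ T ∧ ⊤ ∈ T ∧ ∀ C ∈ T, ∀ D ∈ T, C ⊔ D ∈ T ∧ C ⊓ D ∈ T

/-- a continuous mapping sends the closure of a part into the
closure of its image. -/
theorem continuous_image_closure {β : Type*} [BooleanAlgebra β]
    (T : Finset α) (T' : Finset β)
    (hT : IsShapeTopology T) (hT' : IsShapeTopology T')
    (f : α → β) (hf : Monotone f) (g : β → α)
    (hg : ∀ y : β, f (g y) ≤ y ∧ ∀ x : α, f x ≤ y → x ≤ g y)
    (hcont : ∀ D ∈ T', g D ∈ T)
    (x clx : α) (hclx : clx ∈ T ∧ x ≤ clx ∧ ∀ D ∈ T, x ≤ D → clx ≤ D)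
    (cly : β) (hcly : cly ∈ T' ∧ f x ≤ cly ∧ ∀ D ∈ T', f x ≤ D → cly ≤ D) :
    f clx ≤ cly := by
  have h1 : x ≤ g cly := (hg cly).2 x hcly.2.1
  have h2 : clx ≤ g cly := hclx.2.2 _ (hcont _ hcly.1) h1
  exact le_trans (hf h2) (hg cly).1
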